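/- Suppose an exponential mechanism samples output r from a finite set R with probability proportional to exp(ε·u(D,r)/(2Δu)), where u has sensitivity Δu (|u(D,r) - u(D',r)| ≤ Δu for all neighbors D, D' and all r). Then this mechanism satisfies ε-differential privacy. -/
import Mathlib


open Finset

/-- the exponential mechanism, sampling `r` from a finite set with
probability proportional to `exp(ε·u(D,r)/(2Δu))`, where `u` has sensitivity `Δu`,
satisfies ε-differential privacy: each output probability changes by at most a factor
`e^ε` between neighboring databases. -/
theorem exponential_mechanism_dp {D R : Type*} [Fintype R] [Nonempty R]
    (neighbor : D → D → Prop) (u : D → R → ℝ) (ε Δu : ℝ)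
    (hε : 0 < ε) (hΔu : 0 < Δu)
    (hsens : ∀ d d', neighbor d d' → ∀ r : R, |u d r - u d' r| ≤ Δu)
    (P : D → R → ℝ)
    (hP : ∀ d r, P d r = Real.exp (ε * u d r / (2 * Δu)) /
      ∑ r' : R, Real.exp (ε * u d r' / (2 * Δu))) :
    ∀ d d', neighbor d d' → ∀ r : R, P d r ≤ Real.exp ε * P d' r := by
  intro d d' hnb r
  set a : R → ℝ := fun r => Real.exp (ε * u d r / (2 * Δu)) with ha
  set b : R → ℝ := fun r => Real.exp (ε * u d' r / (2 * Δu)) with hb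
  have hpos2 : (0:ℝ) < 2 * Δu := by positivity
  -- pointwise bound a r ≤ exp(ε/2) * b r
  have key : ∀ s : R, a s ≤ Real.exp (ε/2) * b s := by
    intro s
    have h1 : u d s - u d' s ≤ Δu := (abs_le.1 (hsens d d' hnb s)).2
    have : ε * u d s / (2 * Δu) ≤ ε/2 + ε * u d' s / (2 * Δu) := by
      rw [div_add_div _ _ (two_ne_zero) (ne_of_gt hpos2)]
      rw [div_le_div_iff₀ hpos2 (by positivity)]
      nlinarith [mul_le_mul_of_nonneg_right (mul_le_mul_of_nonneg_left h1 hε.le) hpos2.le]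
    calc a s = Real.exp (ε * u d s / (2 * Δu)) := rfl
      _ ≤ Real.exp (ε/2 + ε * u d' s / (2 * Δu)) := Real.exp_le_exp.2 this
      _ = Real.exp (ε/2) * b s := Real.exp_add _ _
  have key' : ∀ s : R, b s ≤ Real.exp (ε/2) * a s := by
    intro s
    have h1 : u d' s - u d s ≤ Δu := by
      have := (abs_le.1 (hsens d d' hnb s)).1; linarith
    have : ε * u d' s / (2 * Δu) ≤ ε/2 + ε * u d s / (2 * Δu) := by
      rw [div_add_div _ _ (two_ne_zero) (ne_of_gt hpos2)]
      rw [div_le_div_iff₀ hpos2 (by positivity)]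
      nlinarith [mul_le_mul_of_nonneg_right (mul_le_mul_of_nonneg_left h1 hε.le) hpos2.le]
    calc b s = Real.exp (ε * u d' s / (2 * Δu)) := rfl
      _ ≤ Real.exp (ε/2 + ε * u d s / (2 * Δu)) := Real.exp_le_exp.2 this
      _ = Real.exp (ε/2) * a s := Real.exp_add _ _
  have hSa : (0:ℝ) < ∑ s : R, a s :=
    Finset.sum_pos (fun s _ => Real.exp_pos _) univ_nonempty
  have hSb : (0:ℝ) < ∑ s : R, b s :=
    Finset.sum_pos (fun s _ => Real.exp_pos _) univ_nonempty
  have hsum : ∑ s : R, b s ≤ Real.exp (ε/2) * ∑ s : R, a s := by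
    rw [Finset.mul_sum]
    exact Finset.sum_le_sum fun s _ => key' s
  rw [hP, hP]
  show a r / (∑ s : R, a s) ≤ Real.exp ε * (b r / (∑ s : R, b s))
  rw [mul_div_assoc', div_le_div_iff₀ hSa hSb]
  have hbr : (0:ℝ) ≤ b r := (Real.exp_pos _).le
  calc a r * ∑ s : R, b s
      ≤ (Real.exp (ε/2) * b r) * (Real.exp (ε/2) * ∑ s : R, a s) := by
        apply mul_le_mul (key r) hsum hSb.le (by positivity)
    _ = Real.exp ε * b r * ∑ s : R, a s := by
        rw [show Real.exp ε = Real.exp (ε/2) * Real.exp (ε/2) by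
          rw [← Real.exp_add]; ring_nf]
        ring
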